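/- Let f, g : H → ℝ be convex continuous functions on a real Hilbert space H, with C_f := argmin f nonempty, and let γ : [0, T_max) → H be the solution of the subgradient system γ'(t) ∈ −∂f(γ(t)) a.e., γ(0) = x. Define a(t) := f(γ(t)) − g(γ(t)). Then for almost every t ∈ [0, T_max), a is differentiable at t and a'(t) ≤ (s_g(γ(t)) − s_f(γ(t))) · s_f(γ(t)). -/

import Mathlib

open Set Metric MeasureTheory Filter Bornology RealInnerProductSpace

variable {H : Type*} [NormedAddCommGroup H] [InnerProductSpace ℝ H] [CompleteSpace H]

/-- The subdifferential of `f` at `x`. -/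
def subdiff (f : H → ℝ) (x : H) : Set H :=
  {v | ∀ y, f x + ⟪v, y - x⟫ ≤ f y}

/-- The slope of `f` at `x`: the distance from `0` to the subdifferential. -/
noncomputable def slopeFn (f : H → ℝ) (x : H) : ℝ :=
  Metric.infDist 0 (subdiff f x)

/-- The set of (global) minimizers of `f`. -/
def argminSet (f : H → ℝ) : Set H := {x | ∀ y, f x ≤ f y}

/-- One-sided sup of `ω` over `U`:  `‖ω|_U = sup_{x ∈ U} max (ω x) 0`. -/
noncomputable def osup (ω : H → ℝ) (U : Set H) : ℝ :=
  sSup ((fun x => max (ω x) 0) '' U)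
open scoped ENNReal

/-!
Along the curve, `-γ' t` is a subgradient of `f` at `γ t`, and at any time where `f ∘ γ` and
`g ∘ γ` are differentiable the chain rule holds with *every* subgradient: if `v ∈ ∂θ (γ t)` then
`s ↦ θ (γ s) - ⟪v, γ s⟫` is minimal at `t`, so `(θ ∘ γ)' t = ⟪v, γ' t⟫`. For `θ = f` this gives
`(f ∘ γ)' = -‖γ'‖²` and `s_f (γ t) = ‖γ' t‖`; for `θ = g`, Cauchy–Schwarz gives
`-(g ∘ γ)' ≤ s_g (γ t) ‖γ' t‖` (subgradients of `g` exist by Hahn–Banach). Differentiability a.e.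
holds because `γ` is absolutely continuous and `f`, `g` are Lipschitz on compact sets, so the
increments of `f ∘ γ` are dominated by those of `L ∫ ‖γ'‖` and `f ∘ γ` is a difference of
monotone functions.
-/

open Topology

theorem subdiff_nonempty {g : H → ℝ} (hg : ConvexOn ℝ univ g) (hgc : Continuous g) (x : H) :
    (subdiff g x).Nonempty := by
  obtain ⟨φ, hφ⟩ := geometric_hahn_banach_open_point (x := (x, g x)) hg.convex_strict_epigraph
    (by simpa only [mem_univ, true_and] using
      isOpen_lt (f := fun p : H × ℝ => g p.1) (by fun_prop) continuous_snd)
    (by simp)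
  -- `φ` supports the strict epigraph at `(x, g x)`; `c < 0` says the hyperplane is not vertical.
  set c := φ (0, 1)
  have hφ_apply (y : H) (r : ℝ) : φ (y, r) = φ (y, 0) + r * c := by
    rw [show ((y, r) : H × ℝ) = (y, 0) + r • (0, 1) from Prod.ext (by simp) (by simp), map_add,
      map_smul, smul_eq_mul]
  have hlt (y : H) {r : ℝ} (hr : g y < r) : φ (y, 0) + r * c < φ (x, 0) + g x * c := by
    rw [← hφ_apply, ← hφ_apply]; exact hφ (y, r) ⟨mem_univ _, hr⟩
  have hc : c < 0 := by nlinarith [hlt x (lt_add_one (g x))]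
  have hle (y : H) : φ (y, 0) + g y * c ≤ φ (x, 0) + g x * c := by
    refine le_of_forall_pos_lt_add fun ε hε => ?_
    have hεc : ε / -c * c = -ε := by field_simp [hc.ne]
    have := hlt y (r := g y + ε / -c) (lt_add_of_pos_right _ (div_pos hε (neg_pos.2 hc)))
    rw [add_mul, hεc] at this
    linarith
  refine ⟨(InnerProductSpace.toDual ℝ H).symm ((-c)⁻¹ • φ.comp (ContinuousLinearMap.inl ℝ H ℝ)),
    fun y => ?_⟩
  have hinner : (φ (y, 0) - φ (x, 0)) / -c ≤ g y - g x := by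
    rw [div_le_iff₀ (neg_pos.2 hc)]; linarith [hle y]
  rw [InnerProductSpace.toDual_symm_apply]
  simp only [FunLike.coe_smul, Pi.smul_apply, ContinuousLinearMap.coe_comp,
    Function.comp_apply, ContinuousLinearMap.inl_apply, smul_eq_mul]
  rw [show ((y - x, 0) : H × ℝ) = (y, 0) - (x, 0) from Prod.ext rfl (sub_zero 0).symm, map_sub,
    inv_mul_eq_div]
  linarith

section Slope

variable {E : Type*} [NormedAddCommGroup E] [InnerProductSpace ℝ E] {θ : E → ℝ} {γ : ℝ → E}
  {t a : ℝ} {d v : E}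

theorem HasDerivAt.eq_inner_of_mem_subdiff (hγ : HasDerivAt γ d t)
    (hθγ : HasDerivAt (fun s => θ (γ s)) a t) (hv : v ∈ subdiff θ (γ t)) : a = ⟪v, d⟫ := by
  have hmin : IsMinOn (fun s => θ (γ s) - ⟪v, γ s⟫) univ t := isMinOn_univ_iff.2 fun s => by
    have := hv (γ s)
    rw [inner_sub_right] at this
    linarith
  have hinner : HasDerivAt (fun s => ⟪v, γ s⟫) ⟪v, d⟫ t := by
    simpa using (hasDerivAt_const t v).inner ℝ hγ
  have := (hmin.isLocalMin univ_mem).hasDerivAt_eq_zero (hθγ.sub hinner)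
  linarith

theorem HasDerivAt.neg_le_slopeFn_mul_norm (hγ : HasDerivAt γ d t)
    (hθγ : HasDerivAt (fun s => θ (γ s)) a t) (hne : (subdiff θ (γ t)).Nonempty) :
    -a ≤ slopeFn θ (γ t) * ‖d‖ := by
  rcases eq_or_ne d 0 with rfl | hd
  · obtain ⟨v, hv⟩ := hne
    simp [hγ.eq_inner_of_mem_subdiff hθγ hv]
  rw [← div_le_iff₀ (norm_pos_iff.2 hd), slopeFn, le_infDist hne]
  intro v hv
  rw [div_le_iff₀ (norm_pos_iff.2 hd), dist_zero_left, hγ.eq_inner_of_mem_subdiff hθγ hv, ← neg_le]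
  exact neg_le_of_abs_le (abs_real_inner_le_norm v d)

theorem HasDerivAt.slopeFn_eq_norm (hγ : HasDerivAt γ d t)
    (hθγ : HasDerivAt (fun s => θ (γ s)) a t) (hd : -d ∈ subdiff θ (γ t)) :
    slopeFn θ (γ t) = ‖d‖ := by
  refine le_antisymm (by simpa [slopeFn] using infDist_le_dist_of_mem (x := (0 : E)) hd) ?_
  have := hγ.neg_le_slopeFn_mul_norm hθγ ⟨_, hd⟩
  rw [hγ.eq_inner_of_mem_subdiff hθγ hd, inner_neg_left, neg_neg, real_inner_self_eq_norm_sq,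
    sq] at this
  rcases (norm_nonneg d).eq_or_lt with h0 | hpos
  · rw [← h0]; exact infDist_nonneg
  · exact le_of_mul_le_mul_right this hpos

theorem HasDerivAt.sub_le_slopeFn_sub_mul_slopeFn {f g : E → ℝ} {b : ℝ}
    (hγ : HasDerivAt γ d t) (hd : -d ∈ subdiff f (γ t)) (hg : (subdiff g (γ t)).Nonempty)
    (hfγ : HasDerivAt (fun s => f (γ s)) a t) (hgγ : HasDerivAt (fun s => g (γ s)) b t) :
    a - b ≤ (slopeFn g (γ t) - slopeFn f (γ t)) * slopeFn f (γ t) := by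
  have ha : a = -‖d‖ ^ 2 := by
    rw [hγ.eq_inner_of_mem_subdiff hfγ hd, inner_neg_left, real_inner_self_eq_norm_sq]
  rw [hγ.slopeFn_eq_norm hfγ hd]
  linarith [hγ.neg_le_slopeFn_mul_norm hgγ hg]

end Slope

theorem ConvexOn.locallyLipschitz_of_continuous {E : Type*} [NormedAddCommGroup E]
    [NormedSpace ℝ E] {θ : E → ℝ} (hθ : ConvexOn ℝ univ θ) (hθc : Continuous θ) :
    LocallyLipschitz θ :=
  locallyLipschitzOn_univ.1
    ((hθ.locallyLipschitzOn_iff_continuousOn isOpen_univ).2 hθc.continuousOn)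

theorem ae_differentiableAt_of_abs_sub_le {h Φ : ℝ → ℝ} {U : Set ℝ} (hU : IsOpen U)
    (hΦ : MonotoneOn Φ U) (hdom : ∀ s ∈ U, ∀ u ∈ U, s ≤ u → |h u - h s| ≤ Φ u - Φ s) :
    ∀ᵐ t ∂volume.restrict U, DifferentiableAt ℝ h t := by
  have hmono : MonotoneOn (h + Φ) U := fun s hs u hu hsu => by
    have := (abs_le.1 (hdom s hs u hu hsu)).1
    simp only [Pi.add_apply]
    linarith
  filter_upwards [hmono.ae_differentiableWithinAt hU.measurableSet,
    hΦ.ae_differentiableWithinAt hU.measurableSet, ae_restrict_mem hU.measurableSet]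
    with t hsum hΦt ht
  simpa using (hsum.sub hΦt).differentiableAt (hU.mem_nhds ht)

section Primitive

variable {E : Type*} [NormedAddCommGroup E] [NormedSpace ℝ E] {F F' : ℝ → E} {a b : ℝ}

theorem eq_of_not_integrableAtFilter
    (hF : ∀ s u, a ≤ s → s ≤ u → u ≤ b → F u - F s = ∫ t in s..u, F' t) {m : ℝ}
    (hm : ¬ IntegrableAtFilter F' (𝓝[Icc a b] m)) {s u : ℝ} (hs : a ≤ s) (hsu : s ≤ u)
    (hu : u ≤ b) (hmem : Icc s u ∈ 𝓝[Icc a b] m) : F u = F s := by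
  have := hF s u hs hsu hu
  rwa [intervalIntegral.integral_undef, sub_eq_zero] at this
  rw [intervalIntegrable_iff_integrableOn_Icc_of_le hsu]
  exact fun hint => hm ⟨_, hmem, hint⟩

/-- If `F'` were not integrable, the integrals in `hF` would all be the junk value `0` near a point
`m` of non-integrability, making `F` constant off `m`, hence `F' = 0` a.e. -/
theorem integrableOn_Icc_of_sub_eq_intervalIntegral
    (hF : ∀ s u, a ≤ s → s ≤ u → u ≤ b → F u - F s = ∫ t in s..u, F' t)
    (hder : ∀ᵐ t ∂volume.restrict (Icc a b), HasDerivAt F (F' t) t) :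
    IntegrableOn F' (Icc a b) := by
  by_contra hni
  obtain ⟨m, hm, hbad⟩ : ∃ m ∈ Icc a b, ¬ IntegrableAtFilter F' (𝓝[Icc a b] m) := by
    by_contra! h
    exact hni (LocallyIntegrableOn.integrableOn_isCompact h isCompact_Icc)
  have hconst : ∀ w ∈ Icc a b, w ≠ m → F w = F a := by
    have hab : F b = F a :=
      eq_of_not_integrableAtFilter hF hbad le_rfl (hm.1.trans hm.2) le_rfl self_mem_nhdsWithin
    intro w hw hwm
    rcases hwm.lt_or_gt with hlt | hgt
    · rw [← hab]
      refine (eq_of_not_integrableAtFilter hF hbad hw.1 hw.2 le_rfl ?_).symm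
      exact mem_of_superset (inter_mem_nhdsWithin _ (Ioi_mem_nhds hlt))
        fun r hr => ⟨hr.2.le, hr.1.2⟩
    · refine eq_of_not_integrableAtFilter hF hbad le_rfl hw.1 hw.2 ?_
      exact mem_of_superset (inter_mem_nhdsWithin _ (Iio_mem_nhds hgt))
        fun r hr => ⟨hr.1.1, hr.2.le⟩
  have hgood : ∀ᵐ t ∂volume.restrict (Icc a b), t ∈ Ioo a b ∧ t ≠ m := by
    rw [← Measure.restrict_congr_set Ioo_ae_eq_Icc]
    filter_upwards [ae_restrict_mem measurableSet_Ioo,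
      ae_restrict_of_ae (measure_eq_zero_iff_ae_notMem.1 (measure_singleton m))] with t ht htm
    exact ⟨ht, htm⟩
  have hzero : F' =ᵐ[volume.restrict (Icc a b)] 0 := by
    filter_upwards [hder, hgood] with t ht ⟨htI, htm⟩
    have hev : F =ᶠ[𝓝 t] fun _ => F a := by
      filter_upwards [Ioo_mem_nhds htI.1 htI.2, isOpen_ne.mem_nhds htm] with r hr hrm
        using hconst r (Ioo_subset_Icc_self hr) hrm
    exact (ht.congr_of_eventuallyEq hev.symm).unique (hasDerivAt_const t (F a))
  exact hni (integrableOn_zero.congr_fun_ae hzero.symm)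

theorem continuousOn_of_sub_eq_intervalIntegral (hab : a ≤ b)
    (hF : ∀ s u, a ≤ s → s ≤ u → u ≤ b → F u - F s = ∫ t in s..u, F' t)
    (hint : IntegrableOn F' (Icc a b)) : ContinuousOn F (Icc a b) := by
  rw [← uIcc_of_le hab] at hint ⊢
  refine ((continuousOn_const (c := F a)).add
    (intervalIntegral.continuousOn_primitive_interval hint)).congr fun u hu => ?_
  rw [uIcc_of_le hab] at hu
  rw [Pi.add_apply, ← hF a u le_rfl hu.1 hu.2, add_sub_cancel]

theorem ae_differentiableAt_comp_of_sub_eq_intervalIntegral {θ : E → ℝ} (hθ : LocallyLipschitz θ)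
    (hF : ∀ s u, a ≤ s → s ≤ u → u ≤ b → F u - F s = ∫ t in s..u, F' t)
    (hder : ∀ᵐ t ∂volume.restrict (Icc a b), HasDerivAt F (F' t) t) :
    ∀ᵐ t ∂volume.restrict (Icc a b), DifferentiableAt ℝ (fun s => θ (F s)) t := by
  rcases lt_or_ge b a with hba | hab
  · simp [Icc_eq_empty_of_lt hba]
  have hint := integrableOn_Icc_of_sub_eq_intervalIntegral hF hder
  obtain ⟨L, hL⟩ := hθ.locallyLipschitzOn.exists_lipschitzOnWith_of_compact
    (isCompact_Icc.image_of_continuousOn (continuousOn_of_sub_eq_intervalIntegral hab hF hint))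
  set Φ : ℝ → ℝ := fun u => ∫ t in a..u, ‖F' t‖
  have hnorm : IntervalIntegrable (fun t => ‖F' t‖) volume a b :=
    (intervalIntegrable_iff_integrableOn_Icc_of_le hab).2 hint.norm
  have hF_le (s : ℝ) (hs : s ∈ Icc a b) (u : ℝ) (hu : u ∈ Icc a b) (hsu : s ≤ u) :
      ‖F u - F s‖ ≤ Φ u - Φ s := by
    rw [hF s u hs.1 hsu hu.2, intervalIntegral.integral_interval_sub_left
      (hnorm.mono_set (by rw [uIcc_of_le hu.1, uIcc_of_le hab]; exact Icc_subset_Icc_right hu.2))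
      (hnorm.mono_set (by rw [uIcc_of_le hs.1, uIcc_of_le hab]; exact Icc_subset_Icc_right hs.2))]
    exact intervalIntegral.norm_integral_le_integral_norm hsu
  have hdom : ∀ s ∈ Ioo a b, ∀ u ∈ Ioo a b, s ≤ u →
      |θ (F u) - θ (F s)| ≤ L * Φ u - L * Φ s := fun s hs u hu hsu => by
    have := hL.dist_le_mul _ (mem_image_of_mem F (Ioo_subset_Icc_self hu))
      _ (mem_image_of_mem F (Ioo_subset_Icc_self hs))
    rw [Real.dist_eq, dist_eq_norm] at this
    rw [← mul_sub]
    exact this.trans (mul_le_mul_of_nonneg_left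
      (hF_le s (Ioo_subset_Icc_self hs) u (Ioo_subset_Icc_self hu) hsu) L.2)
  have hmono : MonotoneOn (fun u => L * Φ u) (Ioo a b) := fun s hs u hu hsu =>
    mul_le_mul_of_nonneg_left (sub_nonneg.1 ((norm_nonneg _).trans
      (hF_le s (Ioo_subset_Icc_self hs) u (Ioo_subset_Icc_self hu) hsu))) L.2
  rw [← Measure.restrict_congr_set Ioo_ae_eq_Icc]
  exact ae_differentiableAt_of_abs_sub_le isOpen_Ioo hmono hdom

end Primitive

theorem ae_restrict_of_forall_Icc {V : Set ℝ} (hV : IsOpen V) {a : ℝ} {p : ℝ → Prop}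
    (h : ∀ b ∈ V, ∀ᵐ t ∂volume.restrict (Icc a b), p t) :
    ∀ᵐ t ∂volume.restrict {t | a ≤ t ∧ t ∈ V}, p t := by
  have hcover : {t | a ≤ t ∧ t ∈ V} ⊆ ⋃ q ∈ {q : ℚ | (q : ℝ) ∈ V}, Icc a (q : ℝ) := by
    rintro t ⟨hat, htV⟩
    obtain ⟨ε, hε, hball⟩ := Metric.isOpen_iff.1 hV t htV
    obtain ⟨q, htq, hqε⟩ := exists_rat_btwn (lt_add_of_pos_right t hε)
    have hqV : (q : ℝ) ∈ V :=
      hball (by rw [mem_ball, Real.dist_eq, abs_lt]; constructor <;> linarith)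
    exact mem_biUnion hqV ⟨hat, htq.le⟩
  exact ae_restrict_of_ae_restrict_of_subset hcover
    ((ae_restrict_biUnion_iff _ (to_countable _) p).2 fun q hq => h q hq)

theorem derivative_of_difference_along_subgradient_curve_general
    (f g : H → ℝ)
    (hf : ConvexOn ℝ univ f) (hfc : Continuous f)
    (hg : ConvexOn ℝ univ g) (hgc : Continuous g)
    (Tmax : ℝ≥0∞)
    (γ γ' : ℝ → H)
    -- γ is a solution of the subgradient system on [0, Tmax):
    (hderiv : ∀ᵐ t ∂(volume.restrict {t : ℝ | 0 ≤ t ∧ ENNReal.ofReal t < Tmax}),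
      HasDerivAt γ (γ' t) t ∧ -γ' t ∈ subdiff f (γ t))
    -- γ is absolutely continuous (it is the integral of its derivative):
    (hAC : ∀ a b : ℝ, 0 ≤ a → a ≤ b → ENNReal.ofReal b < Tmax →
      γ b - γ a = ∫ t in a..b, γ' t) :
    ∀ᵐ t ∂(volume.restrict {t : ℝ | 0 ≤ t ∧ ENNReal.ofReal t < Tmax}),
      ∃ a' : ℝ, HasDerivAt (fun s => f (γ s) - g (γ s)) a' t ∧
        a' ≤ (slopeFn g (γ t) - slopeFn f (γ t)) * slopeFn f (γ t) := by
  refine ae_restrict_of_forall_Icc (ENNReal.continuous_ofReal.isOpen_preimage _ isOpen_Iio)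
    fun b hb => ?_
  have hsub : Icc 0 b ⊆ {t : ℝ | 0 ≤ t ∧ ENNReal.ofReal t < Tmax} := fun t ht =>
    ⟨ht.1, (ENNReal.ofReal_le_ofReal ht.2).trans_lt hb⟩
  have hderb := ae_restrict_of_ae_restrict_of_subset hsub hderiv
  have hACb (s u : ℝ) (hs : 0 ≤ s) (hsu : s ≤ u) (hu : u ≤ b) :
      γ u - γ s = ∫ t in s..u, γ' t :=
    hAC s u hs hsu ((ENNReal.ofReal_le_ofReal hu).trans_lt hb)
  have hγb := hderb.mono fun _ h => h.1
  filter_upwards [hderb,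
    ae_differentiableAt_comp_of_sub_eq_intervalIntegral (hf.locallyLipschitz_of_continuous hfc)
      hACb hγb,
    ae_differentiableAt_comp_of_sub_eq_intervalIntegral (hg.locallyLipschitz_of_continuous hgc)
      hACb hγb] with t ⟨hγt, hft⟩ hfγ hgγ
  exact ⟨_, hfγ.hasDerivAt.sub hgγ.hasDerivAt, hγt.sub_le_slopeFn_sub_mul_slopeFn hft
    (subdiff_nonempty hg hgc _) hfγ.hasDerivAt hgγ.hasDerivAt⟩

theorem derivative_of_difference_along_subgradient_curve
    (f g : H → ℝ)
    (hf : ConvexOn ℝ univ f) (hfc : Continuous f)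
    (hg : ConvexOn ℝ univ g) (hgc : Continuous g)
    (hCf : (argminSet f).Nonempty)
    (x : H) (Tmax : ℝ≥0∞) (hTmax : 0 < Tmax)
    (γ γ' : ℝ → H)
    (hγ0 : γ 0 = x)
    -- γ is a solution of the subgradient system on [0, Tmax):
    (hderiv : ∀ᵐ t ∂(volume.restrict {t : ℝ | 0 ≤ t ∧ ENNReal.ofReal t < Tmax}),
      HasDerivAt γ (γ' t) t ∧ -γ' t ∈ subdiff f (γ t))
    -- γ is absolutely continuous (it is the integral of its derivative):
    (hAC : ∀ a b : ℝ, 0 ≤ a → a ≤ b → ENNReal.ofReal b < Tmax →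
      γ b - γ a = ∫ t in a..b, γ' t) :
    ∀ᵐ t ∂(volume.restrict {t : ℝ | 0 ≤ t ∧ ENNReal.ofReal t < Tmax}),
      ∃ a' : ℝ, HasDerivAt (fun s => f (γ s) - g (γ s)) a' t ∧
        a' ≤ (slopeFn g (γ t) - slopeFn f (γ t)) * slopeFn f (γ t) :=
  derivative_of_difference_along_subgradient_curve_general f g hf hfc hg hgc Tmax γ γ' hderiv hAC
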